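/- Let E be a real normed space and K ⊆ E a nontrivial cone with norm-base B_K such that the weak closure cl_w B_K is weakly compact. If x* ∈ K^{w#}, then the number c := sInf {x*(x) | x ∈ cl_w B_K} is strictly positive and the pair (x*, c) belongs to the augmented dual cone K^{a+}. -/

import Mathlib

open Set

variable {E : Type*} [NormedAddCommGroup E] [NormedSpace ℝ E]

/-- `K` is a cone: contains `0` and is closed under nonnegative scalar multiplication. -/
def IsCone (K : Set E) : Prop :=
  (0 : E) ∈ K ∧ ∀ t : ℝ, 0 ≤ t → ∀ x ∈ K, t • x ∈ K

/-- A cone is nontrivial if it is neither `{0}` nor the whole space. -/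
def IsNontrivialCone (K : Set E) : Prop :=
  IsCone K ∧ K ≠ {0} ∧ K ≠ Set.univ

/-- The norm-base of a cone: its intersection with the unit sphere. -/
def normBase (K : Set E) : Set E := {x ∈ K | ‖x‖ = 1}

/-- Closure of a set with respect to the weak topology `σ(E, E*)`. -/
noncomputable def wClosure (S : Set E) : Set E :=
  (toWeakSpace ℝ E).symm '' closure ((toWeakSpace ℝ E) '' S)

/-- A set is weakly compact if it is compact in the weak topology `σ(E, E*)`. -/
def WeaklyCompact (S : Set E) : Prop :=
  IsCompact ((toWeakSpace ℝ E) '' S)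

/-- A set is weakly closed if it equals its weak closure. -/
noncomputable def WeaklyClosed (S : Set E) : Prop :=
  wClosure S = S

/-- The (topological) dual cone `K⁺`. -/
def dualCone (K : Set E) : Set (E →L[ℝ] ℝ) :=
  {f | ∀ k ∈ K, 0 ≤ f k}

/-- The set `K^#` of functionals strictly positive on `K \ {0}`. -/
def sharpCone (K : Set E) : Set (E →L[ℝ] ℝ) :=
  {f | ∀ k ∈ K, k ≠ 0 → 0 < f k}

/-- The set `K^{w#}` of functionals strictly positive on the weak closure of the norm-base. -/
noncomputable def wSharpCone (K : Set E) : Set (E →L[ℝ] ℝ) :=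
  {f | ∀ x ∈ wClosure (normBase K), 0 < f x}

/-- The algebraic interior (core) of a set in a real vector space. -/
def core {X : Type*} [AddCommGroup X] [Module ℝ X] (Ω : Set X) : Set X :=
  {x ∈ Ω | ∀ v : X, ∃ ε > 0, ∀ t ∈ Set.Icc (0 : ℝ) ε, x + t • v ∈ Ω}

/-- The augmented dual cone `K^{a+}`. -/
def augDualCone (K : Set E) : Set ((E →L[ℝ] ℝ) × ℝ) :=
  {p | 0 ≤ p.2 ∧ ∀ y ∈ K, 0 ≤ p.1 y - p.2 * ‖y‖}

/-- The set `K^{a#}`. -/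
def augSharpCone (K : Set E) : Set ((E →L[ℝ] ℝ) × ℝ) :=
  {p | 0 ≤ p.2 ∧ p.1 ∈ sharpCone K ∧ ∀ y ∈ K, y ≠ 0 → 0 < p.1 y - p.2 * ‖y‖}

/-- The set `K^{aw#}`. -/
noncomputable def augWSharpCone (K : Set E) : Set ((E →L[ℝ] ℝ) × ℝ) :=
  {p | 0 ≤ p.2 ∧ p.1 ∈ sharpCone K ∧ ∀ y ∈ wClosure (normBase K), p.2 < p.1 y}

/-- `S_C = conv(B_C)`. -/
noncomputable def convBase (C : Set E) : Set E := convexHull ℝ (normBase C)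

/-- `S_C^0 = conv({0} ∪ B_C)`. -/
noncomputable def convBase0 (C : Set E) : Set E := convexHull ℝ ({0} ∪ normBase C)

lemma subset_wClosure (S : Set E) : S ⊆ wClosure S :=
  fun x hx => ⟨toWeakSpace ℝ E x, subset_closure ⟨x, hx, rfl⟩, by simp⟩

lemma WeaklyCompact.isCompact_image {S : Set E} (hS : WeaklyCompact S) (f : E →L[ℝ] ℝ) :
    IsCompact ((fun x => f x) '' S) := by
  have hf : Continuous fun x : WeakSpace ℝ E => f x :=
    WeakBilin.eval_continuous (topDualPairing ℝ E).flip f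
  have h := hS.image hf
  rw [Set.image_image] at h
  exact h

lemma IsCone.inv_norm_smul_mem_normBase {K : Set E} (hK : IsCone K) {y : E} (hy : y ∈ K)
    (hy0 : y ≠ 0) : ‖y‖⁻¹ • y ∈ normBase K :=
  ⟨hK.2 _ (by positivity) y hy, norm_smul_inv_norm hy0⟩

lemma IsNontrivialCone.normBase_nonempty {K : Set E} (hK : IsNontrivialCone K) :
    (normBase K).Nonempty := by
  obtain ⟨hcone, hne, -⟩ := hK
  obtain ⟨y, hy, hy0⟩ : ∃ y ∈ K, y ≠ 0 := by
    by_contra! h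
    exact hne (Set.eq_singleton_iff_unique_mem.2 ⟨hcone.1, h⟩)
  exact ⟨_, hcone.inv_norm_smul_mem_normBase hy hy0⟩

lemma IsCone.mem_augDualCone_of_forall_normBase_le {K : Set E} (hK : IsCone K)
    {f : E →L[ℝ] ℝ} {c : ℝ} (hc : 0 ≤ c) (hfc : ∀ x ∈ normBase K, c ≤ f x) :
    (f, c) ∈ augDualCone K := by
  refine ⟨hc, fun y hy => ?_⟩
  rcases eq_or_ne y 0 with rfl | hy0
  · simp
  have hny : 0 < ‖y‖ := norm_pos_iff.2 hy0
  have h := hfc _ (hK.inv_norm_smul_mem_normBase hy hy0)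
  rw [map_smul, smul_eq_mul, le_inv_mul_iff₀ hny] at h
  simpa only [sub_nonneg, mul_comm] using h

theorem stmt5 (K : Set E) (hK : IsNontrivialCone K)
    (hcomp : WeaklyCompact (wClosure (normBase K)))
    (f : E →L[ℝ] ℝ) (hf : f ∈ wSharpCone K) :
    0 < sInf ((fun x => f x) '' wClosure (normBase K)) ∧
    (f, sInf ((fun x => f x) '' wClosure (normBase K))) ∈ augDualCone K := by
  have himg := hcomp.isCompact_image f
  have hne : ((fun x => f x) '' wClosure (normBase K)).Nonempty :=
    (hK.normBase_nonempty.mono (subset_wClosure _)).image _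
  have hpos : 0 < sInf ((fun x => f x) '' wClosure (normBase K)) := by
    obtain ⟨x, hx, hfx⟩ := himg.sInf_mem hne
    exact hfx ▸ hf x hx
  refine ⟨hpos, hK.1.mem_augDualCone_of_forall_normBase_le hpos.le fun x hx => ?_⟩
  exact csInf_le himg.bddBelow ⟨x, subset_wClosure _ hx, rfl⟩
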